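/- arXiv:1410.2126 — 4 statements merged into one kernel-verified Lean document; each statement's English description precedes it below -/
import Mathlib

section
/- (Easy implication of the symmetry of values.) For every fractional ideal I of O and every v ∈ ℤ^p, if v ∈ val(I^∨) then Δ(γ − v − 1, val(I)) = ∅. -/
open scoped Classical

set_option synthInstance.maxHeartbeats 1000000
set_option maxHeartbeats 1000000

noncomputable section

/-- `K`, the total ring of fractions: the product of `p` copies of the field of
formal Laurent series over `ℂ`. -/
abbrev KK (p : ℕ) : Type := Fin p → LaurentSeries ℂ

lemma algebraMap_component {p : ℕ} (c : ℂ) (i : Fin p) :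
    algebraMap ℂ (KK p) c i = HahnSeries.single (0:ℤ) c := by
  rw [Pi.algebraMap_apply, HahnSeries.algebraMap_apply', PowerSeries.algebraMap_apply,
      Algebra.algebraMap_self, RingHom.id_apply, HahnSeries.ofPowerSeries_C, HahnSeries.C_apply]

lemma smul_eq_algebraMap_mul {p : ℕ} (c : ℂ) (x : KK p) :
    c • x = algebraMap ℂ (KK p) c * x := by
  funext i
  rw [Pi.smul_apply, Pi.mul_apply, algebraMap_component,
      HahnSeries.single_zero_mul_eq_smul]

/-- The `t`-adic order of a Laurent series, with `⊤` for the zero series. -/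
def valC (g : LaurentSeries ℂ) : WithTop ℤ :=
  if g = 0 then ⊤ else (g.order : WithTop ℤ)

/-- The value vector `val(g) = (val_1 g, …, val_p g)`. -/
def valVec {p : ℕ} (g : KK p) : Fin p → WithTop ℤ := fun i => valC (g i)

/-- The set `t^α·O~` of tuples of Laurent series whose `i`-th component has all
coefficients in degrees below `α i` equal to zero (equivalently, whose `i`-th
component has `t`-adic order at least `α i`), as a `ℂ`-submodule of `K`.
For `α = 0` this is `O~` itself. -/
def stdMod (p : ℕ) (α : Fin p → ℤ) : Submodule ℂ (KK p) where
  carrier := {g | ∀ i, ∀ j : ℤ, j < α i → (g i).coeff j = 0}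
  add_mem' := by
    intro a b ha hb i j hj
    simp [HahnSeries.coeff_add, ha i j hj, hb i j hj]
  zero_mem' := by
    intro i j hj
    simp
  smul_mem' := by
    intro c a ha i j hj
    simp [HahnSeries.coeff_smul, ha i j hj]

/-- The dual `S^∨ = {h ∈ K : h·S ⊆ O}` of a subset `S ⊆ K`, as a
`ℂ`-submodule of `K`. -/
def dualMod {p : ℕ} (O : Subalgebra ℂ (KK p)) (S : Set (KK p)) :
    Submodule ℂ (KK p) where
  carrier := {h | ∀ g ∈ S, h * g ∈ O}
  add_mem' := by
    intro a b ha hb g hg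
    simpa [add_mul] using add_mem (ha g hg) (hb g hg)
  zero_mem' := by
    intro g hg
    simpa using O.zero_mem
  smul_mem' := by
    intro c a ha g hg
    rw [smul_eq_algebraMap_mul, mul_assoc]
    exact O.mul_mem (O.algebraMap_mem c) (ha g hg)

/-- `val(S)`: values of the non-zerodivisors of `K` (elements all of whose
components are nonzero) belonging to `S`. -/
def vals {p : ℕ} (S : Set (KK p)) : Set (Fin p → ℤ) :=
  {v | ∃ g ∈ S, ∀ i, valC (g i) = (v i : WithTop ℤ)}

/-- `valbar(S)`: values of all elements of `S`. -/
def valsBar {p : ℕ} (S : Set (KK p)) : Set (Fin p → WithTop ℤ) :=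
  {v | ∃ g ∈ S, ∀ i, valC (g i) = v i}

/-- `I` is a fractional ideal of `O`: an `O`-stable `ℂ`-submodule of `K` which
is finitely generated over `O` and contains a non-zerodivisor of `K`. -/
def IsFracIdeal {p : ℕ} (O : Subalgebra ℂ (KK p)) (I : Submodule ℂ (KK p)) : Prop :=
  (∀ a ∈ O, ∀ x ∈ I, a * x ∈ I) ∧
  (∃ s : Finset (KK p), (↑s : Set (KK p)) ⊆ (I : Set (KK p)) ∧
    ∀ x ∈ I, ∃ a : KK p → KK p, (∀ g ∈ s, a g ∈ O) ∧ x = ∑ g ∈ s, a g * g) ∧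
  (∃ g ∈ I, ∀ i, g i ≠ 0)

/-- `Δ_i(v, M)`. -/
def DeltaI {p : ℕ} (i : Fin p) (v : Fin p → ℤ) (M : Set (Fin p → ℤ)) :
    Set (Fin p → ℤ) :=
  {α ∈ M | α i = v i ∧ ∀ j, j ≠ i → v j < α j}

/-- `Δ(v, M) = ⋃ i, Δ_i(v, M)`. -/
def DeltaSet {p : ℕ} (v : Fin p → ℤ) (M : Set (Fin p → ℤ)) : Set (Fin p → ℤ) :=
  ⋃ i : Fin p, DeltaI i v M

/-- `Λ_i(v, M)`. -/
def LamSet {p : ℕ} (i : Fin p) (v : Fin p → ℤ) (M : Set (Fin p → ℤ)) :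
    Set (Fin p → ℤ) :=
  {α ∈ M | α i = v i ∧ v ≤ α}

/-- `dim_ℂ (B / A)`: the dimension of the image of `B` in `K ⧸ A`
(which is canonically `B/(A ∩ B)`). -/
def qdim {p : ℕ} (A B : Submodule ℂ (KK p)) : ℕ :=
  Module.finrank ℂ ↥(B.map A.mkQ)

/-- `c_I(v) = dim_ℂ (I_v / I_{v+1})`, where `I_v = {g ∈ I : val g ≥ v}`. -/
def cI {p : ℕ} (I : Submodule ℂ (KK p)) (v : Fin p → ℤ) : ℕ :=
  qdim (I ⊓ stdMod p (v + 1)) (I ⊓ stdMod p v)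

/-- `α_I(v) = Σ_{J ⊆ {1,…,p}} (−1)^{p−|J|} c_I(v − e_J)`. -/
def alphaI {p : ℕ} (I : Submodule ℂ (KK p)) (v : Fin p → ℤ) : ℤ :=
  ∑ J : Finset (Fin p),
    (-1 : ℤ) ^ (p - J.card) * cI I (fun j => v j - if j ∈ J then 1 else 0)

/-- `O` itself, as a `ℂ`-submodule of `K`. -/
def algSubmodule {p : ℕ} (O : Subalgebra ℂ (KK p)) : Submodule ℂ (KK p) where
  carrier := O
  add_mem' := fun ha hb => O.add_mem ha hb
  zero_mem' := O.zero_mem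
  smul_mem' := fun c x hx => by
    rw [smul_eq_algebraMap_mul]
    exact O.mul_mem (O.algebraMap_mem c) hx


/-
If `h ∈ I^∨` and `g ∈ I` are non-zerodivisors with `val h = v` and `val g = β`, then
`h g ∈ O` has value `v + β`. Were `β ∈ Δ_i(γ − v − 1, val I)`, this value would lie in
`Δ_i(γ − 1, val O)`, which is empty by Delgado's symmetry at the conductor.
-/

lemma valC_mul (a b : LaurentSeries ℂ) : valC (a * b) = valC a + valC b := by
  by_cases ha : a = 0
  · simp [valC, ha]
  by_cases hb : b = 0
  · simp [valC, hb]
  simp only [valC, if_neg ha, if_neg hb, if_neg (mul_ne_zero ha hb),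
    HahnSeries.order_mul ha hb, WithTop.coe_add]

lemma add_mem_vals_of_mul_mem {p : ℕ} {S T U : Set (KK p)}
    (hmul : ∀ h ∈ S, ∀ g ∈ T, h * g ∈ U) {v β : Fin p → ℤ}
    (hv : v ∈ vals S) (hβ : β ∈ vals T) : v + β ∈ vals U := by
  obtain ⟨h, hS, hvh⟩ := hv
  obtain ⟨g, hT, hvg⟩ := hβ
  exact ⟨h * g, hmul h hS g hT, fun i => by simp [valC_mul, hvh i, hvg i]⟩

lemma add_mem_deltaI_of_mem_deltaI_sub {p : ℕ} {i : Fin p} {w v β : Fin p → ℤ}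
    {M N : Set (Fin p → ℤ)} (hβ : β ∈ DeltaI i (w - v) M) (hN : v + β ∈ N) :
    v + β ∈ DeltaI i w N := by
  obtain ⟨-, hβi, hβj⟩ := hβ
  refine ⟨hN, ?_, fun j hj => ?_⟩
  · simp only [Pi.add_apply, Pi.sub_apply] at hβi ⊢
    omega
  · have := hβj j hj
    simp only [Pi.add_apply, Pi.sub_apply] at this ⊢
    omega

lemma deltaSet_sub_eq_empty_of_add_mem {p : ℕ} {w v : Fin p → ℤ} {M N : Set (Fin p → ℤ)}
    (hN : DeltaSet w N = ∅) (hMN : ∀ β ∈ M, v + β ∈ N) : DeltaSet (w - v) M = ∅ := by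
  refine Set.eq_empty_of_forall_notMem fun β hβ => ?_
  obtain ⟨i, hβi⟩ := Set.mem_iUnion.1 hβ
  have hmem : v + β ∈ DeltaSet w N :=
    Set.mem_iUnion.2 ⟨i, add_mem_deltaI_of_mem_deltaI_sub hβi (hMN β hβi.1)⟩
  rwa [hN] at hmem

theorem easy_implication_symmetry_general {p : ℕ} (O : Subalgebra ℂ (KK p))
    (γ : Fin p → ℕ)
    (hG3 : DeltaSet (fun i => (γ i : ℤ) - 1) (vals (O : Set (KK p))) = ∅)
    (I : Submodule ℂ (KK p)) (v : Fin p → ℤ)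
    (hv : v ∈ vals ((dualMod O (I : Set (KK p)) : Submodule ℂ (KK p)) : Set (KK p))) :
    DeltaSet (fun i => (γ i : ℤ) - v i - 1) (vals (I : Set (KK p))) = ∅ := by
  have hshift : (fun i => (γ i : ℤ) - v i - 1) = (fun i => (γ i : ℤ) - 1) - v := by
    funext i
    simp only [Pi.sub_apply]
    ring
  rw [hshift]
  refine deltaSet_sub_eq_empty_of_add_mem hG3 fun β hβ => add_mem_vals_of_mul_mem ?_ hv hβ
  exact fun h hh g hg => hh g hg

/-- **Easy implication of the symmetry of values.**  If `v ∈ val(I^∨)` then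
`Δ(γ − v − 1, val I) = ∅`. -/
theorem easy_implication_symmetry {p : ℕ} (hp : 1 ≤ p) (O : Subalgebra ℂ (KK p))
    (hO : (O : Set (KK p)) ⊆ (stdMod p 0 : Set (KK p)))
    (γ : Fin p → ℕ)
    (hγ : dualMod O (stdMod p 0 : Set (KK p)) = stdMod p (fun i => (γ i : ℤ)))
    (hG3 : DeltaSet (fun i => (γ i : ℤ) - 1) (vals (O : Set (KK p))) = ∅)
    (I : Submodule ℂ (KK p)) (hI : IsFracIdeal O I) (v : Fin p → ℤ)
    (hv : v ∈ vals ((dualMod O (I : Set (KK p)) : Submodule ℂ (KK p)) : Set (KK p))) :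
    DeltaSet (fun i => (γ i : ℤ) - v i - 1) (vals (I : Set (KK p))) = ∅ :=
  easy_implication_symmetry_general O γ hG3 I v hv
end
end

section
/- Let I be a fractional ideal of O and set 𝒱 = {v ∈ ℤ^p : Δ(γ − v − 1, val(I)) = ∅}. For every w ∈ ℤ^p and i ∈ {1,…,p}: if Λ_i(w, 𝒱) ≠ ∅ then Λ_i(γ − w − e_i, val(I)) = ∅. -/
open scoped Classical

set_option synthInstance.maxHeartbeats 1000000
set_option maxHeartbeats 1000000

noncomputable section

theorem LamSet_sub_single_subset_DeltaI {p : ℕ} (M : Set (Fin p → ℤ)) (γ v w : Fin p → ℤ)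
    (i : Fin p) (hvi : v i = w i) (hwv : w ≤ v) :
    LamSet i (γ - w - Pi.single i 1) M ⊆ DeltaI i (γ - v - 1) M := by
  rintro α ⟨hαM, hαi, hαge⟩
  refine ⟨hαM, ?_, fun j hji => ?_⟩
  · simp only [Pi.sub_apply, Pi.single_eq_same, Pi.one_apply] at hαi ⊢
    rw [hαi, hvi]
  · have hαj := hαge j
    simp only [Pi.sub_apply, Pi.single_eq_of_ne hji, Pi.one_apply] at hαj ⊢
    linarith [hwv j]

theorem lambda_V_implies_lambda_empty_general {p : ℕ}
    (γ : Fin p → ℕ)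
    (I : Submodule ℂ (KK p))
    (w : Fin p → ℤ) (i : Fin p)
    (h : (LamSet i w
      {v : Fin p → ℤ |
        DeltaSet (fun k => (γ k : ℤ) - v k - 1) (vals (I : Set (KK p))) = ∅}).Nonempty) :
    LamSet i ((fun k => (γ k : ℤ) - w k) - Pi.single i 1) (vals (I : Set (KK p))) = ∅ := by
  obtain ⟨v, hvV, hvi, hwv⟩ := h
  refine Set.eq_empty_of_subset_empty fun α hα => ?_
  rw [← hvV.out]
  exact Set.mem_iUnion_of_mem i
    (LamSet_sub_single_subset_DeltaI _ (fun k => (γ k : ℤ)) v w i hvi hwv hα)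

/-- If `Λ_i(w, 𝒱) ≠ ∅`, where `𝒱 = {v : Δ(γ−v−1, val I) = ∅}`, then
`Λ_i(γ − w − e_i, val I) = ∅`. -/
theorem lambda_V_implies_lambda_empty {p : ℕ} (hp : 1 ≤ p) (O : Subalgebra ℂ (KK p))
    (hO : (O : Set (KK p)) ⊆ (stdMod p 0 : Set (KK p)))
    (γ : Fin p → ℕ)
    (hγ : dualMod O (stdMod p 0 : Set (KK p)) = stdMod p (fun i => (γ i : ℤ)))
    (I : Submodule ℂ (KK p)) (hI : IsFracIdeal O I)
    (w : Fin p → ℤ) (i : Fin p)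
    (h : (LamSet i w
      {v : Fin p → ℤ |
        DeltaSet (fun k => (γ k : ℤ) - v k - 1) (vals (I : Set (KK p))) = ∅}).Nonempty) :
    LamSet i ((fun k => (γ k : ℤ) - w k) - Pi.single i 1) (vals (I : Set (KK p))) = ∅ :=
  lambda_V_implies_lambda_empty_general γ I w i h
end
end

section
/- (The Poincaré series of a fractional ideal is a polynomial.) Let I be a fractional ideal of O and ν, λ ∈ ℤ^p with ν + ℕ^p ⊆ val(I) ⊆ λ + ℕ^p. Then α_I(v) = 0 for every v ∈ ℤ^p that does not satisfy λ ≤ v ≤ ν; consequently the Laurent series P_I(t) = Σ_{v ∈ ℤ^p} α_I(v) t^v has finite support. -/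
open scoped Classical

set_option synthInstance.maxHeartbeats 1000000
set_option maxHeartbeats 1000000

noncomputable section

/-! `α_I(v)` is the alternating sum of `c_I` over the corners `v - e_J` of a unit cube, so it
vanishes as soon as `c_I(u - e_i) = c_I(u)` for one direction `i` and all `u` with `u_i = v_i`:
the terms then cancel in pairs `J`, `J ∪ {i}`.

If `v_i < λ_i` this holds because all of `I` has values `≥ λ` (adding to `g ∈ I` an element of
`I` with larger values turns `g` into a non-zerodivisor without changing its finite values),
so `I_u` does not change when `u_i` is lowered below `λ_i`.

If `v_i > ν_i`, `c_I(u)` is the dimension of the space of coefficient vectors in the degrees `u`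
of the elements of `I_u`. An element of `I` of value `u_i` at `i` and large values elsewhere
shows that this space contains `e_i`; modulo `e_i` it does not change when `u_i` is lowered. -/

lemma valC_eq_orderTop (g : LaurentSeries ℂ) : valC g = g.orderTop := by
  unfold valC
  split_ifs with hg
  · simp [hg]
  · exact HahnSeries.order_eq_orderTop_of_ne_zero hg

section stdMod

variable {p : ℕ}

lemma mem_stdMod_iff_le_orderTop {u : Fin p → ℤ} {g : KK p} :
    g ∈ stdMod p u ↔ ∀ i, (u i : WithTop ℤ) ≤ (g i).orderTop := by
  simp only [HahnSeries.le_orderTop_iff_forall, WithTop.coe_lt_coe]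
  rfl

lemma stdMod_antitone : Antitone (stdMod p) :=
  fun _ _ huw _ hg i j hj => hg i j (hj.trans_le (huw i))

lemma stdMod_sup (u w : Fin p → ℤ) : stdMod p (u ⊔ w) = stdMod p u ⊓ stdMod p w := by
  ext g
  simp only [Submodule.mem_inf, mem_stdMod_iff_le_orderTop, Pi.sup_apply, WithTop.coe_max,
    max_le_iff, forall_and]

def coeffAt (p : ℕ) (u : Fin p → ℤ) : KK p →ₗ[ℂ] (Fin p → ℂ) where
  toFun g i := (g i).coeff (u i)
  map_add' _ _ := funext fun _ => HahnSeries.coeff_add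
  map_smul' _ _ := funext fun _ => HahnSeries.coeff_smul

@[simp] lemma coeffAt_apply (u : Fin p → ℤ) (g : KK p) (i : Fin p) :
    coeffAt p u g i = (g i).coeff (u i) := rfl

lemma stdMod_add_one (u : Fin p → ℤ) :
    stdMod p (u + 1) = stdMod p u ⊓ LinearMap.ker (coeffAt p u) := by
  ext g
  simp only [Submodule.mem_inf, LinearMap.mem_ker, funext_iff, coeffAt_apply, Pi.zero_apply]
  constructor
  · intro hg
    exact ⟨fun i j hj => hg i j (by simp; omega), fun i => hg i (u i) (by simp)⟩
  · rintro ⟨hg, hgu⟩ i j hj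
    obtain hj | rfl : j < u i ∨ j = u i := by simp at hj; omega
    exacts [hg i j hj, hgu i]

end stdMod

theorem Submodule.finrank_map_eq_of_inf_ker_eq {K M N N' : Type*} [DivisionRing K]
    [AddCommGroup M] [Module K M] [AddCommGroup N] [Module K N]
    [AddCommGroup N'] [Module K N']
    (B : Submodule K M) {φ : M →ₗ[K] N} {ψ : M →ₗ[K] N'}
    (h : B ⊓ LinearMap.ker φ = B ⊓ LinearMap.ker ψ) :
    Module.finrank K (B.map φ) = Module.finrank K (B.map ψ) := by
  have hker : LinearMap.ker (φ.domRestrict B) = LinearMap.ker (ψ.domRestrict B) := by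
    simpa [LinearMap.ker_domRestrict, Submodule.comap_inf] using congrArg (comap B.subtype) h
  rw [← LinearMap.range_domRestrict, ← LinearMap.range_domRestrict,
    ← (φ.domRestrict B).quotKerEquivRange.finrank_eq,
    ← (ψ.domRestrict B).quotKerEquivRange.finrank_eq, hker]

theorem Submodule.le_of_inf_ker_le {R M : Type*} [Ring R] [AddCommGroup M] [Module R M]
    {V W : Submodule R M} {π : M →ₗ[R] R} {x : M} (hxV : x ∈ V) (hxW : x ∈ W) (hπx : π x = 1)
    (h : V ⊓ LinearMap.ker π ≤ W) : V ≤ W := by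
  intro y hy
  have hyx : y - π y • x ∈ W := h ⟨V.sub_mem hy (V.smul_mem _ hxV), by simp [hπx]⟩
  simpa using W.add_mem hyx (W.smul_mem (π y) hxW)

section coeffSpace

variable {p : ℕ}

def coeffSpace (I : Submodule ℂ (KK p)) (u : Fin p → ℤ) : Submodule ℂ (Fin p → ℂ) :=
  (I ⊓ stdMod p u).map (coeffAt p u)

lemma cI_eq_finrank_coeffSpace (I : Submodule ℂ (KK p)) (u : Fin p → ℤ) :
    cI I u = Module.finrank ℂ (coeffSpace I u) := by
  have hA : I ⊓ stdMod p (u + 1) = (I ⊓ stdMod p u) ⊓ LinearMap.ker (coeffAt p u) := by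
    rw [stdMod_add_one, inf_assoc]
  refine Submodule.finrank_map_eq_of_inf_ker_eq _ ?_
  rw [Submodule.ker_mkQ, hA, inf_left_idem]

variable {I : Submodule ℂ (KK p)} {ν : Fin p → ℤ}

lemma exists_mem_orderTop_eq (hν : ∀ w : Fin p → ℤ, ν ≤ w → w ∈ vals (I : Set (KK p)))
    {w : Fin p → ℤ} (hw : ν ≤ w) : ∃ g ∈ I, ∀ i, (g i).orderTop = w i := by
  obtain ⟨g, hgI, hg⟩ := hν w hw
  exact ⟨g, hgI, fun i => valC_eq_orderTop (g i) ▸ hg i⟩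

lemma le_stdMod_of_vals (hν : ∀ w : Fin p → ℤ, ν ≤ w → w ∈ vals (I : Set (KK p)))
    {lam : Fin p → ℤ} (hlam : ∀ w ∈ vals (I : Set (KK p)), lam ≤ w) : I ≤ stdMod p lam := by
  intro g hgI
  obtain ⟨f, hfI, hf⟩ :=
    exists_mem_orderTop_eq hν (le_sup_left : ν ≤ ν ⊔ fun i => (g i).order + 1)
  have hgf : ∀ i, g i ≠ 0 → ((g + f) i).orderTop = (g i).orderTop := fun i hi =>
    HahnSeries.orderTop_add_eq_left <| by
      rw [hf i, ← HahnSeries.order_eq_orderTop_of_ne_zero hi, WithTop.coe_lt_coe]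
      exact (lt_add_one _).trans_le le_sup_right
  have hne : ∀ i, (g + f) i ≠ 0 := by
    intro i
    by_cases hi : g i = 0
    · simp [hi, ← HahnSeries.orderTop_ne_top, hf i]
    · rwa [← HahnSeries.orderTop_ne_top, hgf i hi, HahnSeries.orderTop_ne_top]
  have hlam_gf := hlam (fun i => ((g + f) i).order) ⟨g + f, I.add_mem hgI hfI, fun i => by
    rw [valC_eq_orderTop, HahnSeries.order_eq_orderTop_of_ne_zero (hne i)]⟩
  refine mem_stdMod_iff_le_orderTop.mpr fun i => ?_
  by_cases hi : g i = 0
  · simp [hi]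
  · rw [← hgf i hi, ← HahnSeries.order_eq_orderTop_of_ne_zero (hne i), WithTop.coe_le_coe]
    exact hlam_gf i

lemma single_mem_coeffSpace (hν : ∀ w : Fin p → ℤ, ν ≤ w → w ∈ vals (I : Set (KK p)))
    {u : Fin p → ℤ} {i : Fin p} (hi : ν i ≤ u i) : Pi.single i 1 ∈ coeffSpace I u := by
  set w := Function.update ((u + 1) ⊔ ν) i (u i)
  have hw : ν ≤ w := by
    intro j
    rcases eq_or_ne j i with rfl | hj
    · simpa [w] using hi
    · simp [w, hj]
  have huw : u ≤ w := by
    intro j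
    rcases eq_or_ne j i with rfl | hj
    · simp [w]
    · simp [w, hj]
  obtain ⟨g, hgI, hg⟩ := exists_mem_orderTop_eq hν hw
  have hc : (g i).coeff (u i) ≠ 0 := HahnSeries.coeff_orderTop_ne (by simp [hg i, w])
  have hgu : coeffAt p u g = (g i).coeff (u i) • Pi.single i 1 := by
    funext j
    rcases eq_or_ne j i with rfl | hj
    · simp
    · have : (u j : WithTop ℤ) < (g j).orderTop := by
        rw [hg j, WithTop.coe_lt_coe]; simp [w, hj]
      simp [HahnSeries.coeff_eq_zero_of_lt_orderTop this, hj]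
  have hgu_mem : g ∈ I ⊓ stdMod p u :=
    ⟨hgI, mem_stdMod_iff_le_orderTop.mpr fun j => by rw [hg j]; exact_mod_cast huw j⟩
  have := (coeffSpace I u).smul_mem ((g i).coeff (u i))⁻¹ ⟨g, hgu_mem, rfl⟩
  rwa [hgu, smul_smul, inv_mul_cancel₀ hc, one_smul] at this

lemma coeffSpace_sub_single (hν : ∀ w : Fin p → ℤ, ν ≤ w → w ∈ vals (I : Set (KK p)))
    {u : Fin p → ℤ} {i : Fin p} (hi : ν i < u i) :
    coeffSpace I (u - Pi.single i 1) = coeffSpace I u := by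
  set u' := u - Pi.single i 1
  have hu'i : u' i = u i - 1 := by simp [u']
  have hu'j : ∀ j ≠ i, u' j = u j := fun j hj => by simp [u', hj]
  have hsingle' := single_mem_coeffSpace hν (u := u') (i := i) (by omega)
  have hsingle := single_mem_coeffSpace hν (u := u) hi.le
  have hπ : (LinearMap.proj i : (Fin p → ℂ) →ₗ[ℂ] ℂ) (Pi.single i 1) = 1 := by simp
  apply le_antisymm
  · refine Submodule.le_of_inf_ker_le hsingle' hsingle hπ ?_
    rintro _ ⟨⟨g, ⟨hgI, hgu'⟩, rfl⟩, hgi⟩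
    replace hgi : (g i).coeff (u i - 1) = 0 := by simpa [hu'i] using hgi
    have hgu : g ∈ stdMod p u := by
      intro j k hk
      rcases eq_or_ne j i with rfl | hj
      · obtain hk | rfl : k < u j - 1 ∨ k = u j - 1 := by omega
        exacts [hgu' j k (hu'i ▸ hk), hgi]
      · exact hgu' j k (by rwa [hu'j j hj])
    have : coeffAt p u' g = coeffAt p u g - (g i).coeff (u i) • Pi.single i 1 := by
      funext j
      rcases eq_or_ne j i with rfl | hj
      · simp [hu'i, hgi]
      · simp [hu'j j hj, hj]
    rw [this]
    exact Submodule.sub_mem _ ⟨g, ⟨hgI, hgu⟩, rfl⟩ (Submodule.smul_mem _ _ hsingle)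
  · refine Submodule.le_of_inf_ker_le hsingle hsingle' hπ ?_
    rintro _ ⟨⟨g, ⟨hgI, hgu⟩, rfl⟩, hgi⟩
    refine ⟨g, ⟨hgI, stdMod_antitone (by simp [u']) hgu⟩, funext fun j => ?_⟩
    rcases eq_or_ne j i with rfl | hj
    · simpa [hu'i, hgu j (u j - 1) (by omega)] using hgi.symm
    · simp [hu'j j hj]

lemma cI_sub_single_of_lt (hν : ∀ w : Fin p → ℤ, ν ≤ w → w ∈ vals (I : Set (KK p)))
    {u : Fin p → ℤ} {i : Fin p} (hi : ν i < u i) : cI I (u - Pi.single i 1) = cI I u := by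
  rw [cI_eq_finrank_coeffSpace, cI_eq_finrank_coeffSpace, coeffSpace_sub_single hν hi]

end coeffSpace

lemma cI_sub_single_of_lt_of_le_stdMod {p : ℕ} {I : Submodule ℂ (KK p)} {lam : Fin p → ℤ}
    (hI : I ≤ stdMod p lam) {u : Fin p → ℤ} {i : Fin p} (hi : u i < lam i) :
    cI I (u - Pi.single i 1) = cI I u := by
  have hsup : ∀ w : Fin p → ℤ, w i ≤ lam i → (w - Pi.single i 1) ⊔ lam = w ⊔ lam := by
    intro w hw
    funext j
    rcases eq_or_ne j i with rfl | hj
    · simp only [Pi.sup_apply, Pi.sub_apply, Pi.single_eq_same]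
      omega
    · simp [hj]
  have hI_inf : ∀ w, I ⊓ stdMod p (w ⊔ lam) = I ⊓ stdMod p w := fun w => by
    rw [stdMod_sup, inf_comm (stdMod p w), ← inf_assoc, inf_eq_left.mpr hI]
  have h1 : u - Pi.single i 1 + 1 = u + 1 - Pi.single i 1 := by abel
  unfold cI
  rw [h1, ← hI_inf (u - Pi.single i 1), ← hI_inf (u + 1 - Pi.single i 1), hsup u hi.le,
    hsup (u + 1) (by simp; omega), hI_inf, hI_inf]

theorem Finset.sum_neg_one_pow_card_sub_mul_eq_zero {ι : Type*} [Fintype ι] [DecidableEq ι]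
    (f : Finset ι → ℤ) (i : ι) (hf : ∀ J, i ∉ J → f (insert i J) = f J) :
    ∑ J : Finset ι, (-1) ^ (Fintype.card ι - J.card) * f J = 0 := by
  rw [← Finset.powerset_univ, ← Finset.insert_erase (Finset.mem_univ i),
    Finset.sum_powerset_insert (Finset.notMem_erase i _), ← Finset.sum_add_distrib]
  refine Finset.sum_eq_zero fun J hJ => ?_
  have hiJ : i ∉ J := fun h => Finset.notMem_erase i _ (Finset.mem_powerset.mp hJ h)
  have hcard : (insert i J).card ≤ Fintype.card ι := Finset.card_le_univ _
  rw [Finset.card_insert_of_notMem hiJ] at hcard ⊢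
  rw [hf J hiJ, show Fintype.card ι - J.card = Fintype.card ι - (J.card + 1) + 1 by omega,
    pow_succ]
  ring

lemma alphaI_eq_zero_of_cI_sub_single {p : ℕ} {I : Submodule ℂ (KK p)} {v : Fin p → ℤ}
    (i : Fin p) (h : ∀ u : Fin p → ℤ, u i = v i → cI I (u - Pi.single i 1) = cI I u) :
    alphaI I v = 0 := by
  have hcube : ∀ J : Finset (Fin p), i ∉ J →
      (fun j => v j - if j ∈ insert i J then 1 else 0) =
        (fun j => v j - if j ∈ J then 1 else 0) - Pi.single i 1 := by
    intro J hiJ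
    funext j
    rcases eq_or_ne j i with rfl | hj
    · simp [hiJ]
    · simp [hj]
  have := Finset.sum_neg_one_pow_card_sub_mul_eq_zero
    (fun J => (cI I (fun j => v j - if j ∈ J then 1 else 0) : ℤ)) i fun J hiJ => by
      simp only [hcube J hiJ]
      exact congrArg _ (h _ (by simp [hiJ]))
  rwa [Fintype.card_fin] at this

theorem alphaI_finite_support_general {p : ℕ} (I : Submodule ℂ (KK p))
    (ν lam : Fin p → ℤ)
    (hν : ∀ w : Fin p → ℤ, ν ≤ w → w ∈ vals (I : Set (KK p)))
    (hlam : ∀ w ∈ vals (I : Set (KK p)), lam ≤ w) :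
    (∀ v : Fin p → ℤ, ¬(lam ≤ v ∧ v ≤ ν) → alphaI I v = 0) ∧
    {v : Fin p → ℤ | alphaI I v ≠ 0}.Finite := by
  have hI := le_stdMod_of_vals hν hlam
  have vanish : ∀ v : Fin p → ℤ, ¬(lam ≤ v ∧ v ≤ ν) → alphaI I v = 0 := by
    intro v hv
    obtain ⟨i, hi⟩ : ∃ i, v i < lam i ∨ ν i < v i := by
      by_contra! h
      exact hv ⟨fun i => (h i).1, fun i => (h i).2⟩
    refine alphaI_eq_zero_of_cI_sub_single i fun u hu => ?_
    rw [← hu] at hi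
    exact hi.elim (cI_sub_single_of_lt_of_le_stdMod hI) (cI_sub_single_of_lt hν)
  refine ⟨vanish, (Set.finite_Icc lam ν).subset fun v hv => ?_⟩
  by_contra hbox
  exact hv (vanish v hbox)

/-- **The Poincaré series of a fractional ideal is a polynomial**: `α_I(v)`
vanishes outside the box `λ ≤ v ≤ ν`, hence has finite support. -/
theorem alphaI_finite_support {p : ℕ} (hp : 1 ≤ p) (O : Subalgebra ℂ (KK p))
    (hO : (O : Set (KK p)) ⊆ (stdMod p 0 : Set (KK p)))
    (I : Submodule ℂ (KK p)) (hI : IsFracIdeal O I)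
    (ν lam : Fin p → ℤ)
    (hν : ∀ w : Fin p → ℤ, ν ≤ w → w ∈ vals (I : Set (KK p)))
    (hlam : ∀ w ∈ vals (I : Set (KK p)), lam ≤ w) :
    (∀ v : Fin p → ℤ, ¬(lam ≤ v ∧ v ≤ ν) → alphaI I v = 0) ∧
    {v : Fin p → ℤ | alphaI I v ≠ 0}.Finite :=
  alphaI_finite_support_general I ν lam hν hlam
end
end

section
/- Let I be a fractional ideal of O with O~ ⊆ I (as holds for the module of logarithmic residues of a reduced plane curve, since 0 + ℕ^p ⊆ val(I)). Then val(I) = {v ∈ val(I) : v ≤ 0} ∪ {v ∈ ℤ^p : inf(v, 0) ∈ val(I)}; in particular val(I) is determined by its subset of vectors with all coordinates ≤ 0. -/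
open scoped Classical

set_option synthInstance.maxHeartbeats 1000000
set_option maxHeartbeats 1000000

noncomputable section

/- If `t^α·O~ ⊆ I`, then `v ∈ val(I)` depends only on `inf(v, α)`: adding an element of
`t^α·O~` to `g ∈ I` may replace any component `g_i` of order `≥ α_i` by `t^(w_i)` for any
`w_i ≥ α_i`, and leaves the other components alone. -/

lemma coeff_eq_zero_of_lt_valC {a : LaurentSeries ℂ} {m j : ℤ} (ha : valC a = m) (hj : j < m) :
    a.coeff j = 0 := by
  unfold valC at ha
  split_ifs at ha with ha0
  · simp [ha0]
  · have hord : a.order = m := by exact_mod_cast ha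
    exact HahnSeries.coeff_eq_zero_of_lt_order (hord ▸ hj)

lemma valC_single_one (n : ℤ) : valC (HahnSeries.single n (1 : ℂ)) = n := by
  rw [valC, if_neg (HahnSeries.single_ne_zero one_ne_zero), HahnSeries.order_single one_ne_zero]

lemma exists_valC_add_eq_of_min_eq {a : LaurentSeries ℂ} {m n c : ℤ} (ha : valC a = m)
    (hmn : min m c = min n c) :
    ∃ b : LaurentSeries ℂ, (∀ j < c, b.coeff j = 0) ∧ valC (a + b) = n := by
  rcases lt_or_ge n c with hnc | hcn
  · refine ⟨0, fun _ _ => rfl, ?_⟩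
    have hm : m = n := by omega
    rwa [add_zero, ← hm]
  · refine ⟨HahnSeries.single n 1 - a, fun j hj => ?_, by rw [add_sub_cancel, valC_single_one]⟩
    rw [HahnSeries.coeff_sub, HahnSeries.coeff_single_of_ne (by omega),
      coeff_eq_zero_of_lt_valC ha (by omega), sub_zero]

lemma mem_vals_of_inf_eq {p : ℕ} {I : Submodule ℂ (KK p)} {α v w : Fin p → ℤ}
    (hα : (stdMod p α : Set (KK p)) ⊆ I) (hv : v ∈ vals (I : Set (KK p)))
    (hvw : ∀ i, min (v i) (α i) = min (w i) (α i)) :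
    w ∈ vals (I : Set (KK p)) := by
  obtain ⟨g, hgI, hgv⟩ := hv
  choose b hb hgb using fun i => exists_valC_add_eq_of_min_eq (hgv i) (hvw i)
  exact ⟨g + b, I.add_mem hgI (hα hb), hgb⟩

theorem vals_eq_nonpos_union_general {p : ℕ} (I : Submodule ℂ (KK p))
    (h0 : (stdMod p 0 : Set (KK p)) ⊆ (I : Set (KK p))) :
    vals (I : Set (KK p)) =
      {v ∈ vals (I : Set (KK p)) | v ≤ 0} ∪
        {v : Fin p → ℤ | (fun i => min (v i) 0) ∈ vals (I : Set (KK p))} := by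
  ext v
  constructor
  · intro hv
    exact Or.inr (mem_vals_of_inf_eq h0 hv fun i => by simp)
  · rintro (⟨hv, -⟩ | hv)
    · exact hv
    · exact mem_vals_of_inf_eq h0 hv fun i => by simp

/-- The value set of a fractional ideal containing `O~` is determined by its
vectors with nonpositive coordinates. -/
theorem vals_eq_nonpos_union {p : ℕ} (hp : 1 ≤ p) (O : Subalgebra ℂ (KK p))
    (hO : (O : Set (KK p)) ⊆ (stdMod p 0 : Set (KK p)))
    (I : Submodule ℂ (KK p)) (hI : IsFracIdeal O I)
    (h0 : (stdMod p 0 : Set (KK p)) ⊆ (I : Set (KK p))) :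
    vals (I : Set (KK p)) =
      {v ∈ vals (I : Set (KK p)) | v ≤ 0} ∪
        {v : Fin p → ℤ | (fun i => min (v i) 0) ∈ vals (I : Set (KK p))} :=
  vals_eq_nonpos_union_general I h0
end
end
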